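/- Let G be a simple bipartite graph with parts A and B, each of size 7, such that the multiset of vertex degrees of A in G is {4,3,3,3,3,3,3} and the multiset of vertex degrees of B in G is {4,3,3,3,3,3,3}. Suppose the unique degree-4 vertex b of A and the unique degree-4 vertex b' of B are adjacent, via the edge e = bb', and suppose that every cycle of length 4 in G contains the edge e. Then the graph G - e obtained by deleting the edge e is isomorphic to the Heawood graph, and the distance between b and b' in G - e equals 3. -/

import Mathlib

/-!
Deleting `e` leaves a cubic bipartite graph `H` on `7 + 7` vertices without 4-cycles. Reading the
left vertices as lines and the right ones as points, every line has three points, every point lies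
on three lines and two lines share at most one point; counting the `3 * 2` lines that meet a given
line shows that any two lines meet, so `H` is the incidence graph of a Fano plane. Labelling lines
and points by `ZMod 7` starting from a flag, the labels exhaust the plane and the incidences are
forced to be the cyclic ones, line `k` being `{k - 1, k, k + 2}`; the incidence graph of this cyclic
plane is the Heawood graph. Finally `b` and `b'` are non-adjacent vertices on opposite sides, hence
at odd distance at least 3, and a line through `b'` meets `b` in a point, giving a path of length 3.
-/

open SimpleGraph

/-- The Heawood graph on vertex set `ZMod 14`: distinct vertices `i` and `j` are adjacent
iff `j = i + 1`, or `j = i - 1`, or (`i` is even and `j = i + 5`), or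
(`j` is even and `i = j + 5`), all mod 14. -/
def heawood : SimpleGraph (ZMod 14) where
  Adj i j := i ≠ j ∧ (j = i + 1 ∨ j = i - 1 ∨ (Even i ∧ j = i + 5) ∨ (Even j ∧ i = j + 5))
  symm := by
    refine ⟨?_⟩
    rintro i j ⟨hne, h⟩
    refine ⟨hne.symm, ?_⟩
    rcases h with h | h | h | h
    · right; left; rw [h]; ring
    · left; rw [h]; ring
    · right; right; right; exact h
    · right; right; left; exact h
  loopless := ⟨fun i h => h.1 rfl⟩

instance (i : ZMod 14) : Decidable (Even i) :=
  decidable_of_iff (∃ r : ZMod 14, i = r + r) Iff.rfl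

instance : DecidableRel heawood.Adj := fun i j =>
  inferInstanceAs (Decidable
    (i ≠ j ∧ (j = i + 1 ∨ j = i - 1 ∨ (Even i ∧ j = i + 5) ∨ (Even j ∧ i = j + 5))))

open Finset Function Sum

variable {α β : Type*}

theorem apply_eq_of_map_univ_eq_cons_replicate {γ δ : Type*} [Fintype γ] [DecidableEq γ]
    {f : γ → δ} {a x : γ} {d c : δ} {n : ℕ} (h : univ.val.map f = d ::ₘ Multiset.replicate n c)
    (ha : f a = d) (hx : x ≠ a) : f x = c := by
  rw [← Multiset.cons_erase (mem_univ_val a), Multiset.map_cons, ha,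
    Multiset.cons_inj_right] at h
  exact Multiset.eq_of_mem_replicate
    (h ▸ Multiset.mem_map_of_mem f ((Multiset.mem_erase_of_ne hx).2 (mem_univ_val x)))

namespace SimpleGraph

variable {V : Type*}

def FourCycleFree (G : SimpleGraph V) : Prop :=
  ∀ ⦃u u' w w'⦄, G.Adj u w → G.Adj u' w → G.Adj u w' → G.Adj u' w' → u = u' ∨ w = w'

theorem fourCycleFree_deleteEdges_singleton {G : SimpleGraph V} {e : Sym2 V}
    (h : ∀ (v : V) (c : G.Walk v v), c.IsCycle → c.length = 4 → e ∈ c.edges) :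
    (G.deleteEdges {e}).FourCycleFree := by
  intro u u' w w' huw hu'w huw' hu'w'
  by_contra! hne
  simp only [deleteEdges_adj, Set.mem_singleton_iff] at huw hu'w huw' hu'w'
  have hcycle := h u (.cons huw.1 (.cons hu'w.1.symm (.cons hu'w'.1 (.cons huw'.1.symm .nil))))
    (by simp [Walk.cons_isCycle_iff, Walk.cons_isPath_iff, huw.1.ne.symm, hu'w.1.ne.symm,
      huw'.1.ne.symm, hu'w'.1.ne, hne.1, hne.1.symm, hne.2]) rfl
  simp only [Walk.edges_cons, Walk.edges_nil, List.mem_cons, List.not_mem_nil, or_false] at hcycle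
  rcases hcycle with he | he | he | he
  exacts [huw.2 he.symm, hu'w.2 (Sym2.eq_swap.trans he.symm), hu'w'.2 he.symm,
    huw'.2 (Sym2.eq_swap.trans he.symm)]

variable [Fintype V] [DecidableEq V] {G : SimpleGraph V} [DecidableRel G.Adj] {u v w : V}

theorem degree_deleteEdges_singleton_add_one (h : G.Adj u v) :
    (G.deleteEdges {s(u, v)}).degree u + 1 = G.degree u := by
  rw [← card_neighborFinset_eq_degree, ← card_neighborFinset_eq_degree,
    ← card_erase_add_one ((mem_neighborFinset _ _ _).2 h)]
  congr 2
  ext x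
  simp only [mem_neighborFinset, deleteEdges_adj, Set.mem_singleton_iff, Sym2.congr_right,
    mem_erase]
  tauto

theorem degree_deleteEdges_singleton_of_ne (hu : w ≠ u) (hv : w ≠ v) :
    (G.deleteEdges {s(u, v)}).degree w = G.degree w := by
  rw [← card_neighborFinset_eq_degree, ← card_neighborFinset_eq_degree]
  congr 1
  ext x
  simp [hu, hv]

theorem isRegularOfDegree_deleteEdges_singleton {k : ℕ} (h : G.Adj u v)
    (hu : G.degree u = k + 1) (hv : G.degree v = k + 1)
    (hw : ∀ w, w ≠ u → w ≠ v → G.degree w = k) :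
    (G.deleteEdges {s(u, v)}).IsRegularOfDegree k := by
  intro w
  by_cases hwu : w = u
  · subst hwu
    have := degree_deleteEdges_singleton_add_one h
    omega
  by_cases hwv : w = v
  · subst hwv
    have := degree_deleteEdges_singleton_add_one h.symm
    rw [Sym2.eq_swap] at this
    omega
  rw [degree_deleteEdges_singleton_of_ne hwu hwv, hw w hwu hwv]

end SimpleGraph

def incidenceGraph (M : α → β → Prop) : SimpleGraph (α ⊕ β) where
  Adj u v := match u, v with
    | inl i, inr j => M i j
    | inr j, inl i => M i j
    | _, _ => False
  symm := ⟨by rintro (i | j) (i' | j') h <;> exact h⟩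
  loopless := ⟨by rintro (i | j) h <;> exact h⟩

instance (M : α → β → Prop) [DecidableRel M] : DecidableRel (incidenceGraph M).Adj
  | inl _, inl _ => isFalse id
  | inl i, inr j => inferInstanceAs (Decidable (M i j))
  | inr j, inl i => inferInstanceAs (Decidable (M i j))
  | inr _, inr _ => isFalse id

section IncidenceGraph

variable {M : α → β → Prop} {i i' : α} {j j' : β}

@[simp] theorem incidenceGraph_adj_inl_inr : (incidenceGraph M).Adj (inl i) (inr j) ↔ M i j :=
  Iff.rfl

@[simp] theorem incidenceGraph_adj_inr_inl : (incidenceGraph M).Adj (inr j) (inl i) ↔ M i j :=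
  Iff.rfl

@[simp] theorem not_incidenceGraph_adj_inl_inl : ¬ (incidenceGraph M).Adj (inl i) (inl i') := id

@[simp] theorem not_incidenceGraph_adj_inr_inr : ¬ (incidenceGraph M).Adj (inr j) (inr j') := id

def incidenceGraphCongr {α' β' : Type*} {M' : α' → β' → Prop} (ℓ : α ≃ α') (p : β ≃ β')
    (h : ∀ i j, M' (ℓ i) (p j) ↔ M i j) : incidenceGraph M ≃g incidenceGraph M' where
  toEquiv := Equiv.sumCongr ℓ p
  map_rel_iff' := by rintro (i | j) (i' | j') <;> simp [h]

def incidenceGraphColoring (M : α → β → Prop) : (incidenceGraph M).Coloring Bool :=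
  Coloring.mk Sum.isLeft <| by rintro (i | j) (i' | j') h <;> simp_all

end IncidenceGraph

theorem eq_incidenceGraph (H : SimpleGraph (α ⊕ β))
    (hH : ∀ ⦃u v⦄, H.Adj u v → u.isLeft ≠ v.isLeft) :
    H = incidenceGraph fun i j => H.Adj (inl i) (inr j) := by
  ext (i | j) (i' | j')
  · exact iff_false_intro fun h => hH h rfl
  · rfl
  · exact H.adj_comm _ _
  · exact iff_false_intro fun h => hH h rfl

theorem degree_inl_eq_card [Fintype β] (H : SimpleGraph (α ⊕ β)) [DecidableRel H.Adj]
    (hH : ∀ ⦃u v⦄, H.Adj u v → u.isLeft ≠ v.isLeft) (i : α) [Fintype (H.neighborSet (inl i))] :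
    H.degree (inl i) = #{j | H.Adj (inl i) (inr j)} := by
  rw [← card_neighborFinset_eq_degree, ← card_map (Embedding.inr : β ↪ α ⊕ β)]
  congr 1
  ext (i' | j)
  · simp only [mem_neighborFinset, mem_map, Embedding.inr_apply, reduceCtorEq, and_false,
      exists_false, iff_false]
    exact fun h => hH h rfl
  · simp

theorem degree_inr_eq_card [Fintype α] (H : SimpleGraph (α ⊕ β)) [DecidableRel H.Adj]
    (hH : ∀ ⦃u v⦄, H.Adj u v → u.isLeft ≠ v.isLeft) (j : β) [Fintype (H.neighborSet (inr j))] :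
    H.degree (inr j) = #{i | H.Adj (inl i) (inr j)} := by
  rw [← card_neighborFinset_eq_degree, ← card_map (Embedding.inl : α ↪ α ⊕ β)]
  congr 1
  ext (i | j')
  · simp [H.adj_comm]
  · simp only [mem_neighborFinset, mem_map, Embedding.inl_apply, reduceCtorEq, and_false,
      exists_false, iff_false]
    exact fun h => hH h rfl

structure IsFanoPlane [Fintype α] [Fintype β] (M : α → β → Prop) [DecidableRel M] : Prop where
  card_lines : Fintype.card α = 7
  card_points : Fintype.card β = 7
  card_points_on : ∀ i, #{j | M i j} = 3
  card_lines_through : ∀ j, #{i | M i j} = 3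
  eq_or_eq : ∀ ⦃i i' j j'⦄, M i j → M i' j → M i j' → M i' j' → i = i' ∨ j = j'

theorem IsFanoPlane.of_isRegularOfDegree [Fintype α] [Fintype β] (H : SimpleGraph (α ⊕ β))
    [DecidableRel H.Adj] (hα : Fintype.card α = 7) (hβ : Fintype.card β = 7)
    (hH : ∀ ⦃u v⦄, H.Adj u v → u.isLeft ≠ v.isLeft) (hreg : H.IsRegularOfDegree 3)
    (hC4 : H.FourCycleFree) :
    IsFanoPlane fun i j => H.Adj (inl i) (inr j) where
  card_lines := hα
  card_points := hβ
  card_points_on i := (degree_inl_eq_card H hH i).symm.trans (hreg _)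
  card_lines_through j := (degree_inr_eq_card H hH j).symm.trans (hreg _)
  eq_or_eq _ _ _ _ h₁ h₂ h₃ h₄ := by simpa using hC4 h₁ h₂ h₃ h₄

/-- The cyclic Fano plane: line `k` is the translate `{k - 1, k, k + 2}` of the difference set
`{0, 1, 3}`. -/
def fanoRel (k m : ZMod 7) : Prop := m = k - 1 ∨ m = k ∨ m = k + 2

instance : DecidableRel fanoRel := fun k m =>
  inferInstanceAs (Decidable (m = k - 1 ∨ m = k ∨ m = k + 2))

def heawoodIso : heawood ≃g incidenceGraph fanoRel where
  toFun x := if Even x then inl (x.val / 2 : ℕ) else inr (x.val / 2 : ℕ)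
  invFun := Sum.elim (fun k => 2 * (k.val : ZMod 14)) (fun m => 2 * (m.val : ZMod 14) + 1)
  left_inv := by decide
  right_inv := by decide
  map_rel_iff' := by decide

namespace IsFanoPlane

variable [Fintype α] [Fintype β] {M : α → β → Prop} [DecidableRel M] (hM : IsFanoPlane M)
include hM

theorem dual : IsFanoPlane fun j i => M i j :=
  ⟨hM.card_points, hM.card_lines, hM.card_lines_through, hM.card_points_on,
    fun _ _ _ _ h₁ h₂ h₃ h₄ => (hM.eq_or_eq h₁ h₃ h₂ h₄).symm⟩

theorem not_rel_of_ne {i i' : α} {j j' : β} (h : M i j) (h' : M i' j) (h'' : M i' j')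
    (hi : i ≠ i') (hj : j ≠ j') : ¬ M i j' :=
  fun h''' => (hM.eq_or_eq h h' h''' h'').elim hi hj

theorem exists_common_point (i i' : α) : ∃ j, M i j ∧ M i' j := by
  classical
  by_cases hii' : i' = i
  · obtain ⟨j, hj⟩ : ({j | M i j} : Finset β).Nonempty := by
      rw [← card_pos, hM.card_points_on]; norm_num
    exact ⟨j, by simp_all⟩
  -- The other lines through the three points of `i` are `3 * 2` distinct lines, hence all of them.
  set S := ({j | M i j} : Finset β).biUnion fun j => ({x | M x j} : Finset α).erase i
  have hdisj : (({j | M i j} : Finset β) : Set β).PairwiseDisjoint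
      fun j => ({x | M x j} : Finset α).erase i := by
    intro j hj j' hj' hjj'
    refine disjoint_left.2 fun x hx hx' => ?_
    simp only [coe_filter, mem_univ, true_and, mem_erase, mem_filter] at hj hj' hx hx'
    exact (hM.eq_or_eq hj hx.2 hj' hx'.2).elim (fun h => hx.1 h.symm) hjj'
  have hS : #S = 6 := by
    rw [card_biUnion hdisj, sum_const_nat (m := 2) fun j hj => by
      rw [card_erase_of_mem (by simpa using hj), hM.card_lines_through], hM.card_points_on]
  have hSeq : S = univ.erase i :=
    eq_of_subset_of_card_le (fun x hx => by
      simp only [S, mem_biUnion, mem_erase] at hx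
      obtain ⟨j, -, hxi, -⟩ := hx
      exact mem_erase.2 ⟨hxi, mem_univ x⟩) (by
      rw [hS, card_erase_of_mem (mem_univ _), card_univ, hM.card_lines])
  have : i' ∈ S := hSeq ▸ mem_erase.2 ⟨hii', mem_univ _⟩
  simp only [S, mem_biUnion, mem_filter, mem_univ, true_and, mem_erase] at this
  obtain ⟨j, hij, -, hi'j⟩ := this
  exact ⟨j, hij, hi'j⟩

theorem exists_third_point {i : α} {a b : β} (ha : M i a) (hb : M i b) (hab : a ≠ b) :
    ∃ c, a ≠ c ∧ b ≠ c ∧ ∀ j, M i j ↔ j = a ∨ j = b ∨ j = c := by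
  classical
  have hcard : #((({j | M i j} : Finset β).erase a).erase b) = 1 := by
    rw [card_erase_of_mem (by simp [hb, hab.symm]), card_erase_of_mem (by simpa using ha),
      hM.card_points_on]
  obtain ⟨c, hc⟩ := card_eq_one.1 hcard
  refine ⟨c, ?_, ?_, fun j => ?_⟩
  · rintro rfl; simpa using congrArg (a ∈ ·) hc
  · rintro rfl; simpa using congrArg (b ∈ ·) hc
  · by_cases hja : j = a
    · simp [hja, ha]
    by_cases hjb : j = b
    · simp [hjb, hb]
    simpa [hja, hjb] using congrArg (j ∈ ·) hc

theorem exists_two_more_points {i : α} {a : β} (ha : M i a) :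
    ∃ b c, a ≠ b ∧ a ≠ c ∧ b ≠ c ∧ ∀ j, M i j ↔ j = a ∨ j = b ∨ j = c := by
  obtain ⟨b, hb, hba⟩ := exists_mem_ne (s := {j | M i j}) (by rw [hM.card_points_on]; norm_num) a
  obtain ⟨c, hac, hbc, h⟩ := hM.exists_third_point ha (by simpa using hb) hba.symm
  exact ⟨b, c, hba.symm, hac, hbc, h⟩

theorem rel_or_rel_or_rel {i L : α} {a b c : β} (hL : ∀ j, M L j ↔ j = a ∨ j = b ∨ j = c) :
    M i a ∨ M i b ∨ M i c := by
  obtain ⟨j, hLj, hij⟩ := hM.exists_common_point L i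
  rcases (hL j).1 hLj with rfl | rfl | rfl
  exacts [.inl hij, .inr (.inl hij), .inr (.inr hij)]

end IsFanoPlane

/-- Labels exhibiting 16 of the 21 incidences of `fanoRel`; the other five are then forced
(`CyclicFrame.rel_of_fanoRel`). -/
structure CyclicFrame (M : α → β → Prop) where
  line : ZMod 7 → α
  point : ZMod 7 → β
  points_on_zero : ∀ j, M (line 0) j ↔ j = point 0 ∨ j = point 6 ∨ j = point 2
  points_on_one : ∀ j, M (line 1) j ↔ j = point 0 ∨ j = point 1 ∨ j = point 3
  points_on_five : ∀ j, M (line 5) j ↔ j = point 0 ∨ j = point 5 ∨ j = point 4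
  lines_through_zero : ∀ i, M i (point 0) ↔ i = line 0 ∨ i = line 1 ∨ i = line 5
  lines_through_two : ∀ i, M i (point 2) ↔ i = line 0 ∨ i = line 2 ∨ i = line 3
  lines_through_six : ∀ i, M i (point 6) ↔ i = line 0 ∨ i = line 6 ∨ i = line 4
  rel_six_one : M (line 6) (point 1)
  rel_six_five : M (line 6) (point 5)
  rel_two_one : M (line 2) (point 1)

theorem IsFanoPlane.nonempty_cyclicFrame [Fintype α] [Fintype β] {M : α → β → Prop}
    [DecidableRel M] (hM : IsFanoPlane M) : Nonempty (CyclicFrame M) := by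
  obtain ⟨l0⟩ : Nonempty α := Fintype.card_pos_iff.1 (by rw [hM.card_lines]; norm_num)
  obtain ⟨p0, hl0p0, -⟩ := hM.exists_common_point l0 l0
  obtain ⟨p6, p2, hp06, -, -, hl0⟩ := hM.exists_two_more_points hl0p0
  obtain ⟨l1, l5, hl01, -, -, hp0⟩ := hM.dual.exists_two_more_points hl0p0
  obtain ⟨p1, p3, hp01, -, -, hl1⟩ := hM.exists_two_more_points ((hp0 l1).2 (by simp))
  have hl0p1 : ¬ M l0 p1 :=
    hM.not_rel_of_ne hl0p0 ((hp0 l1).2 (by simp)) ((hl1 p1).2 (by simp)) hl01 hp01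
  obtain ⟨l6, hl6p6, hl6p1⟩ := hM.dual.exists_common_point p6 p1
  have hl06 : l0 ≠ l6 := by rintro rfl; exact hl0p1 hl6p1
  obtain ⟨l4, -, -, hp6⟩ := hM.dual.exists_third_point ((hl0 p6).2 (by simp)) hl6p6 hl06
  obtain ⟨l2, hl2p2, hl2p1⟩ := hM.dual.exists_common_point p2 p1
  obtain ⟨l3, -, -, hp2⟩ := hM.dual.exists_third_point ((hl0 p2).2 (by simp)) hl2p2
    (by rintro rfl; exact hl0p1 hl2p1)
  obtain ⟨p5, hl5p5, hl6p5⟩ := hM.exists_common_point l5 l6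
  have hl6p0 : ¬ M l6 p0 :=
    hM.not_rel_of_ne hl6p6 ((hl0 p6).2 (by simp)) hl0p0 hl06.symm hp06.symm
  obtain ⟨p4, -, -, hl5⟩ := hM.exists_third_point ((hp0 l5).2 (by simp)) hl5p5
    (by rintro rfl; exact hl6p0 hl6p5)
  exact ⟨⟨![l0, l1, l2, l3, l4, l5, l6], ![p0, p1, p2, p3, p4, p5, p6], hl0, hl1, hl5, hp0, hp2,
    hp6, hl6p1, hl6p5, hl2p1⟩⟩

namespace CyclicFrame

variable [Fintype α] [Fintype β] {M : α → β → Prop} [DecidableRel M] (F : CyclicFrame M)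
  (hM : IsFanoPlane M)
include hM

theorem bijective_line : Bijective F.line := by
  refine (Fintype.bijective_iff_surjective_and_card _).2
    ⟨fun i => ?_, by rw [ZMod.card, hM.card_lines]⟩
  obtain ⟨j, h0j, hij⟩ := hM.exists_common_point (F.line 0) i
  rcases (F.points_on_zero j).1 h0j with rfl | rfl | rfl
  · rcases (F.lines_through_zero i).1 hij with rfl | rfl | rfl <;> exact ⟨_, rfl⟩
  · rcases (F.lines_through_six i).1 hij with rfl | rfl | rfl <;> exact ⟨_, rfl⟩
  · rcases (F.lines_through_two i).1 hij with rfl | rfl | rfl <;> exact ⟨_, rfl⟩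

theorem bijective_point : Bijective F.point := by
  refine (Fintype.bijective_iff_surjective_and_card _).2
    ⟨fun j => ?_, by rw [ZMod.card, hM.card_points]⟩
  obtain ⟨i, hi0, hij⟩ := hM.dual.exists_common_point (F.point 0) j
  rcases (F.lines_through_zero i).1 hi0 with rfl | rfl | rfl
  · rcases (F.points_on_zero j).1 hij with rfl | rfl | rfl <;> exact ⟨_, rfl⟩
  · rcases (F.points_on_one j).1 hij with rfl | rfl | rfl <;> exact ⟨_, rfl⟩
  · rcases (F.points_on_five j).1 hij with rfl | rfl | rfl <;> exact ⟨_, rfl⟩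

theorem rel_of_fanoRel {k m : ZMod 7} (hkm : fanoRel k m) : M (F.line k) (F.point m) := by
  have hℓ := (F.bijective_line hM).1
  have hp := (F.bijective_point hM).1
  obtain ⟨ℓ, p, h0, h1, h5, h0', h2', h6', h61, h65, h21⟩ := F
  have h00 : M (ℓ 0) (p 0) := (h0 _).2 (by simp)
  have h02 : M (ℓ 0) (p 2) := (h0 _).2 (by simp)
  have h06 : M (ℓ 0) (p 6) := (h0 _).2 (by simp)
  have h22 : M (ℓ 2) (p 2) := (h2' _).2 (by simp)
  have h32 : M (ℓ 3) (p 2) := (h2' _).2 (by simp)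
  have h46 : M (ℓ 4) (p 6) := (h6' _).2 (by simp)
  have h66 : M (ℓ 6) (p 6) := (h6' _).2 (by simp)
  -- Lines `2`, `3`, `4` meet lines `1` and `5`; two of the three candidate points are excluded
  -- each time because they lie on a second line through a point already on the first.
  have h24 : M (ℓ 2) (p 4) := ((hM.rel_or_rel_or_rel h5).resolve_left
    (hM.not_rel_of_ne h22 h02 h00 (hℓ.ne (by decide)) (hp.ne (by decide)))).resolve_left
    (hM.not_rel_of_ne h21 h61 h65 (hℓ.ne (by decide)) (hp.ne (by decide)))
  have h30 : ¬ M (ℓ 3) (p 0) :=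
    hM.not_rel_of_ne h32 h02 h00 (hℓ.ne (by decide)) (hp.ne (by decide))
  have h33 : M (ℓ 3) (p 3) := ((hM.rel_or_rel_or_rel h1).resolve_left h30).resolve_left
    (hM.not_rel_of_ne h32 h22 h21 (hℓ.ne (by decide)) (hp.ne (by decide)))
  have h35 : M (ℓ 3) (p 5) := ((hM.rel_or_rel_or_rel h5).resolve_left h30).resolve_right
    (hM.not_rel_of_ne h32 h22 h24 (hℓ.ne (by decide)) (hp.ne (by decide)))
  have h40 : ¬ M (ℓ 4) (p 0) :=
    hM.not_rel_of_ne h46 h06 h00 (hℓ.ne (by decide)) (hp.ne (by decide))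
  have h43 : M (ℓ 4) (p 3) := ((hM.rel_or_rel_or_rel h1).resolve_left h40).resolve_left
    (hM.not_rel_of_ne h46 h66 h61 (hℓ.ne (by decide)) (hp.ne (by decide)))
  have h44 : M (ℓ 4) (p 4) := ((hM.rel_or_rel_or_rel h5).resolve_left h40).resolve_left
    (hM.not_rel_of_ne h46 h66 h65 (hℓ.ne (by decide)) (hp.ne (by decide)))
  have hrows : ∀ k, M (ℓ k) (p (k - 1)) ∧ M (ℓ k) (p k) ∧ M (ℓ k) (p (k + 2)) := by
    intro k
    fin_cases k
    exacts [⟨h06, h00, h02⟩, (by simp [h1] : M (ℓ 1) (p 0) ∧ M (ℓ 1) (p 1) ∧ M (ℓ 1) (p 3)),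
      ⟨h21, h22, h24⟩, ⟨h32, h33, h35⟩, ⟨h43, h44, h46⟩,
      (by simp [h5] : M (ℓ 5) (p 4) ∧ M (ℓ 5) (p 5) ∧ M (ℓ 5) (p 0)), ⟨h65, h66, h61⟩]
  obtain ⟨h₁, h₂, h₃⟩ := hrows k
  rcases hkm with rfl | rfl | rfl <;> assumption

theorem rel_iff_fanoRel (k m : ZMod 7) : M (F.line k) (F.point m) ↔ fanoRel k m := by
  classical
  refine ⟨fun hkm => ?_, F.rel_of_fanoRel hM⟩
  have hp := (F.bijective_point hM).1
  have hline : ({k - 1, k, k + 2} : Finset (ZMod 7)).image F.point =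
      ({j | M (F.line k) j} : Finset β) := by
    refine eq_of_subset_of_card_le (fun j hj => ?_) ?_
    · obtain ⟨m', hm', rfl⟩ := mem_image.1 hj
      simpa using F.rel_of_fanoRel hM (by simpa [fanoRel] using hm')
    · rw [hM.card_points_on, card_image_of_injective _ hp]
      exact (by decide : ∀ k : ZMod 7, 3 ≤ #({k - 1, k, k + 2} : Finset (ZMod 7))) k
  have : F.point m ∈ ({k - 1, k, k + 2} : Finset (ZMod 7)).image F.point :=
    hline ▸ (by simpa using hkm)
  simpa [fanoRel, hp.eq_iff] using this

end CyclicFrame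

namespace IsFanoPlane

variable [Fintype α] [Fintype β] {M : α → β → Prop} [DecidableRel M] (hM : IsFanoPlane M)
include hM

theorem nonempty_iso_heawood : Nonempty (incidenceGraph M ≃g heawood) := by
  obtain ⟨F⟩ := hM.nonempty_cyclicFrame
  exact ⟨(heawoodIso.trans (incidenceGraphCongr (.ofBijective _ (F.bijective_line hM))
    (.ofBijective _ (F.bijective_point hM)) (F.rel_iff_fanoRel hM))).symm⟩

theorem dist_eq_three {i : α} {j : β} (h : ¬ M i j) :
    (incidenceGraph M).dist (inl i) (inr j) = 3 := by
  obtain ⟨i', hi'j, -⟩ := hM.dual.exists_common_point j j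
  obtain ⟨j', hij', hi'j'⟩ := hM.exists_common_point i i'
  let w : (incidenceGraph M).Walk (inl i) (inr j) :=
    .cons (incidenceGraph_adj_inl_inr.2 hij') <| .cons (incidenceGraph_adj_inr_inl.2 hi'j') <|
      .cons (incidenceGraph_adj_inl_inr.2 hi'j) .nil
  obtain ⟨w', hw'⟩ := w.reachable.exists_walk_length_eq_dist
  have hodd : Odd w'.length := ((incidenceGraphColoring M).odd_length_iff_not_congr w').2
    (by decide : ¬true = true ↔ false = true)
  have hle : (incidenceGraph M).dist (inl i) (inr j) ≤ 3 := dist_le w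
  have hne : (incidenceGraph M).dist (inl i) (inr j) ≠ 1 := fun h1 => h (dist_eq_one_iff_adj.1 h1)
  obtain ⟨n, hn⟩ := hodd
  omega

end IsFanoPlane

/-- Let `G` be a bipartite graph with parts of size 7, both of degree multiset
`{4,3,3,3,3,3,3}`, such that the degree-4 vertices `b ∈ A` and `b' ∈ B` are joined by an
edge `e`, and every 4-cycle of `G` contains `e`.  Then `G - e` is isomorphic to the Heawood
graph, and `b` and `b'` are at distance 3 in `G - e`. -/
theorem deleteEdge_iso_heawood (G : SimpleGraph (Fin 7 ⊕ Fin 7)) [DecidableRel G.Adj]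
    (hbip : ∀ x y, G.Adj x y → (x.isLeft ∧ y.isRight) ∨ (x.isRight ∧ y.isLeft))
    (hA : Multiset.map (fun i : Fin 7 => G.degree (Sum.inl i)) Finset.univ.val
      = {4, 3, 3, 3, 3, 3, 3})
    (hB : Multiset.map (fun j : Fin 7 => G.degree (Sum.inr j)) Finset.univ.val
      = {4, 3, 3, 3, 3, 3, 3})
    (b b' : Fin 7)
    (hb : G.degree (Sum.inl b) = 4) (hb' : G.degree (Sum.inr b') = 4)
    (hadj : G.Adj (Sum.inl b) (Sum.inr b'))
    (h4 : ∀ (v : Fin 7 ⊕ Fin 7) (c : G.Walk v v), c.IsCycle → c.length = 4 →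
      s(Sum.inl b, Sum.inr b') ∈ c.edges) :
    Nonempty ((G.deleteEdges {s(Sum.inl b, Sum.inr b')}) ≃g heawood) ∧
      (G.deleteEdges {s(Sum.inl b, Sum.inr b')}).dist (Sum.inl b) (Sum.inr b') = 3 := by
  classical
  set H := G.deleteEdges {s(inl b, inr b')}
  have hG : ∀ ⦃u v⦄, G.Adj u v → u.isLeft ≠ v.isLeft := by
    intro u v h
    have := hbip u v h
    cases u <;> cases v <;> simp_all
  have hH : ∀ ⦃u v⦄, H.Adj u v → u.isLeft ≠ v.isLeft := fun _ _ h => hG (deleteEdges_le _ h)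
  have hreg : H.IsRegularOfDegree 3 := by
    refine isRegularOfDegree_deleteEdges_singleton hadj hb hb' ?_
    rintro (i | j) hi hj
    · exact apply_eq_of_map_univ_eq_cons_replicate (f := fun i => G.degree (inl i)) (n := 6)
        hA hb (by simpa using hi)
    · exact apply_eq_of_map_univ_eq_cons_replicate (f := fun j => G.degree (inr j)) (n := 6)
        hB hb' (by simpa using hj)
  have hM := IsFanoPlane.of_isRegularOfDegree H (by simp) (by simp) hH hreg
    (fourCycleFree_deleteEdges_singleton h4)
  rw [eq_incidenceGraph H hH]
  exact ⟨hM.nonempty_iso_heawood, hM.dist_eq_three (by simp [H])⟩
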